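/- Every open subset 𝒰 of E^∞ is strategically Ramsey. -/

import Mathlib

section Defs

variable {𝔽 : Type} [Field 𝔽] {E : Type} [AddCommGroup E] [Module 𝔽 E]

/-- The support of a vector with respect to the basis `b`. -/
noncomputable def supp (b : Module.Basis ℕ 𝔽 E) (x : E) : Finset ℕ :=
  (b.repr x).support

/-- `VecLt b x y` means `x < y`: every element of the support of `x` is smaller than
every element of the support of `y`. -/
def VecLt (b : Module.Basis ℕ 𝔽 E) (x y : E) : Prop :=
  ∀ m ∈ supp b x, ∀ n ∈ supp b y, m < n

/-- `NatLt b k x` means `k < x`: `k` is smaller than every element of the support of `x`. -/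
def NatLt (b : Module.Basis ℕ 𝔽 E) (k : ℕ) (x : E) : Prop :=
  ∀ n ∈ supp b x, k < n

/-- An infinite block sequence: a sequence of nonzero vectors with `x n < x (n + 1)`. -/
def IsBlockSeq (b : Module.Basis ℕ 𝔽 E) (x : ℕ → E) : Prop :=
  (∀ n, x n ≠ 0) ∧ ∀ n, VecLt b (x n) (x (n + 1))

/-- A finite block sequence: a list of nonzero vectors, consecutively increasing in the
block ordering. -/
def IsFinBlockSeq (b : Module.Basis ℕ 𝔽 E) (l : List E) : Prop :=
  (∀ x ∈ l, x ≠ 0) ∧ l.Chain' (VecLt b)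

/-- A block subspace: a subspace spanned by an infinite block sequence. -/
def IsBlockSubspace (b : Module.Basis ℕ 𝔽 E) (X : Submodule 𝔽 E) : Prop :=
  ∃ y : ℕ → E, IsBlockSeq b y ∧ X = Submodule.span 𝔽 (Set.range y)

/-- The list of the first `n` values of a sequence. -/
def hist {α : Type _} (x : ℕ → α) (n : ℕ) : List α :=
  List.ofFn (fun j : Fin n => x j)

/-- The concatenation of a finite prefix with an infinite sequence. -/
def prefCat {α : Type _} (l : List α) (x : ℕ → α) : ℕ → α := fun n =>
  if h : n < l.length then l.get ⟨n, h⟩ else x (n - l.length)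

/-- Player II has a strategy in Gowers' game `G_X(pre)` below `X` to play in `A`:
player I plays infinite-dimensional subspaces `Y i ≤ X`, player II answers with a
nonzero vector of `Y i`, the vectors played by II forming a block sequence, and the
outcome (the prefix `pre` followed by II's vectors) lies in `A`. -/
def IIWinsG (b : Module.Basis ℕ 𝔽 E) (X : Submodule 𝔽 E) (pre : List E) (A : Set (ℕ → E)) :
    Prop :=
  ∃ σ : List (Submodule 𝔽 E) → E,
    ∀ Y : ℕ → Submodule 𝔽 E,
      (∀ i, Y i ≤ X ∧ ¬FiniteDimensional 𝔽 ↥(Y i)) →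
      (∀ i, σ (hist Y (i + 1)) ∈ Y i ∧ σ (hist Y (i + 1)) ≠ 0 ∧
          VecLt b (σ (hist Y (i + 1))) (σ (hist Y (i + 2)))) ∧
        prefCat pre (fun i => σ (hist Y (i + 1))) ∈ A

/-- Player I has a strategy in the infinite asymptotic game `F_X(pre)` below `X` to play
in `A`: player I plays strictly increasing natural numbers `n i`, player II answers with
nonzero vectors of `X` with `n i < x i` forming a block sequence, and the outcome
(the prefix `pre` followed by II's vectors) lies in `A`. -/
def IWinsF (b : Module.Basis ℕ 𝔽 E) (X : Submodule 𝔽 E) (pre : List E) (A : Set (ℕ → E)) :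
    Prop :=
  ∃ σ : List E → ℕ,
    ∀ x : ℕ → E,
      (∀ i, x i ∈ X ∧ x i ≠ 0 ∧ NatLt b (σ (hist x i)) (x i) ∧
          VecLt b (x i) (x (i + 1))) →
      (∀ i, σ (hist x i) < σ (hist x (i + 1))) ∧ prefCat pre x ∈ A

/-- A set `A ⊆ E^∞` is strategically Ramsey if for every block subspace `V` and every
finite block sequence `z`, there is a block subspace `W ≤ V` such that either II has a
strategy in `G_W(z)` to play in `A`, or I has a strategy in `F_W(z)` to play in `Aᶜ`. -/
def StrategicallyRamsey (b : Module.Basis ℕ 𝔽 E) (A : Set (ℕ → E)) : Prop :=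
  ∀ V : Submodule 𝔽 E, IsBlockSubspace b V → ∀ z : List E, IsFinBlockSeq b z →
    ∃ W : Submodule 𝔽 E, W ≤ V ∧ IsBlockSubspace b W ∧
      (IIWinsG b W z A ∨ IWinsF b W z Aᶜ)

end Defs

/-!
Combinatorial forcing. Enumerating all positions (finite sequences of vectors), a fusion
argument produces a block subspace `W ≤ V` such that: if some block subspace of `W` lets II win
Gowers' game from a position `q` into `U`, then so does `W`; and if none does (`q` is rejected),
then `q ⌢ y` is rejected too, for every nonzero `y ∈ W` above some bound depending on `q`. So either
II wins `G_W(z)`, or I wins `F_W(z)` by always playing above these bounds, which keeps every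
position reached rejected. An outcome in the open set `U` would lie in a cylinder inside `U`,
that is, be determined by a finite position from which II wins trivially.
-/

open Submodule Set

section Support

variable {𝔽 : Type} [Field 𝔽] {E : Type} [AddCommGroup E] [Module 𝔽 E] {b : Module.Basis ℕ 𝔽 E}

theorem mem_supp {x : E} {n : ℕ} : n ∈ supp b x ↔ b.repr x n ≠ 0 :=
  Finsupp.mem_support_iff

theorem supp_nonempty (b : Module.Basis ℕ 𝔽 E) {x : E} (hx : x ≠ 0) : (supp b x).Nonempty := by
  simpa [supp, Finsupp.support_nonempty_iff] using hx

variable (b) in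
noncomputable def msup (x : E) : ℕ := (supp b x).sup id

theorem le_msup {x : E} {k : ℕ} (hk : k ∈ supp b x) : k ≤ msup b x :=
  Finset.le_sup (f := id) hk

theorem NatLt.mono {m n : ℕ} {x : E} (h : m ≤ n) (hx : NatLt b n x) : NatLt b m x :=
  fun k hk => h.trans_lt (hx k hk)

theorem vecLt_of_natLt_msup {x y : E} (h : NatLt b (msup b x) y) : VecLt b x y :=
  fun _ hm _ hn => (le_msup hm).trans_lt (h _ hn)

variable (b) in
noncomputable def supportAbove (n : ℕ) : Submodule 𝔽 E :=
  LinearMap.ker (LinearMap.pi fun k : Fin (n + 1) => b.coord k)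

theorem mem_supportAbove {n : ℕ} {v : E} : v ∈ supportAbove b n ↔ NatLt b n v := by
  simp only [supportAbove, LinearMap.mem_ker, funext_iff, LinearMap.pi_apply,
    Module.Basis.coord_apply, Pi.zero_apply, Fin.forall_iff, Nat.lt_succ_iff, NatLt, mem_supp]
  exact forall_congr' fun k => by rw [not_imp_comm, not_lt]

end Support

section Sequences

variable {α : Type*}

theorem hist_succ (x : ℕ → α) (n : ℕ) : hist x (n + 1) = hist x n ++ [x n] := by
  simp only [hist]
  rw [List.ofFn_succ']
  simp

theorem hist_succ' (x : ℕ → α) (n : ℕ) :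
    hist x (n + 1) = x 0 :: hist (fun j => x (j + 1)) n :=
  List.ofFn_succ

theorem reverse_hist_succ (x : ℕ → α) (n : ℕ) :
    (hist x (n + 1)).reverse = x n :: (hist x n).reverse := by
  simp [hist_succ]

theorem map_hist {β : Type*} (g : α → β) (x : ℕ → α) (n : ℕ) :
    (hist x n).map g = hist (fun j => g (x j)) n :=
  List.map_ofFn

theorem prefCat_of_lt (l : List α) (f : ℕ → α) {n : ℕ} (h : n < l.length) :
    prefCat l f n = l[n] := by
  simp [prefCat, h]

theorem prefCat_append_singleton (l : List α) (y : α) (f : ℕ → α) :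
    prefCat (l ++ [y]) f = prefCat l (Stream'.cons y f) := by
  funext n
  rcases lt_trichotomy n l.length with h | rfl | h
  · simp [prefCat, h, Nat.lt_succ_of_lt h, List.getElem_append_left]
  · simp [prefCat, Stream'.cons]
  · have : n - l.length = n - (l.length + 1) + 1 := by omega
    simp [prefCat, h.not_gt, (Nat.succ_le_of_lt h).not_gt, this, Stream'.cons]

theorem prefCat_append_hist (l : List α) (x : ℕ → α) (n : ℕ) :
    prefCat (l ++ hist x n) (fun k => x (n + k)) = prefCat l x := by
  funext k
  by_cases hl : k < l.length
  · simp [prefCat, hl, List.getElem_append_left, Nat.lt_add_right]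
  by_cases hn : k < l.length + n
  · simp [prefCat, hl, hn, List.getElem_append_right (not_lt.1 hl), hist]
  · simp only [prefCat, List.length_append, hist, List.length_ofFn, hl, hn, dite_false]
    congr 1
    omega

theorem prefCat_append_hist_mem_cylinder (l : List α) (x f : ℕ → α) (n : ℕ) :
    prefCat (l ++ hist x n) f ∈ PiNat.cylinder (prefCat l x) n := by
  intro k hk
  have hk' : k < (l ++ hist x n).length := by
    simp only [hist, List.length_append, List.length_ofFn]
    omega
  rw [← prefCat_append_hist l x n, prefCat_of_lt _ _ hk', prefCat_of_lt _ _ hk']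

def prefixSum (g : List α → ℕ) (l : List α) : ℕ := l.length + (l.inits.map g).sum

theorem le_prefixSum (g : List α → ℕ) (l : List α) : g l ≤ prefixSum g l :=
  (List.le_sum_of_mem (List.mem_map_of_mem ((List.mem_inits _ _).2 (List.prefix_refl l)))).trans
    (Nat.le_add_left _ _)

theorem prefixSum_lt_append_singleton (g : List α → ℕ) (l : List α) (a : α) :
    prefixSum g l < prefixSum g (l ++ [a]) := by
  simp only [prefixSum, List.inits_append, List.length_append, List.length_singleton,
    List.inits, List.tail_cons, List.map_append, List.map_cons, List.map_nil, List.sum_append,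
    List.sum_cons, List.sum_nil]
  omega

end Sequences

theorem IsOpen.exists_cylinder_subset {α : Type*} [TopologicalSpace α] {U : Set (ℕ → α)}
    (hU : IsOpen U) {x : ℕ → α} (hx : x ∈ U) : ∃ n, PiNat.cylinder x n ⊆ U := by
  obtain ⟨I, u, hu, hIU⟩ := isOpen_pi_iff.1 hU x hx
  obtain ⟨n, hn⟩ := I.bddAbove
  refine ⟨n + 1, fun y hy => hIU fun i hi => ?_⟩
  rw [hy i (Nat.lt_succ_of_le (hn hi))]
  exact (hu i hi).2

section BlockSequences

variable {𝔽 : Type} [Field 𝔽] {E : Type} [AddCommGroup E] [Module 𝔽 E] {b : Module.Basis ℕ 𝔽 E}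
  {u : ℕ → E}

theorem IsBlockSeq.vecLt_of_lt (hu : IsBlockSeq b u) {i j : ℕ} (hij : i < j) :
    VecLt b (u i) (u j) := by
  induction j, hij using Nat.le_induction with
  | base => exact hu.2 i
  | succ j _ ih =>
    intro m hm n hn
    obtain ⟨k, hk⟩ := supp_nonempty b (hu.1 j)
    exact (ih m hm k hk).trans (hu.2 j k hk n hn)

theorem IsBlockSeq.repr_eq_zero_of_ne (hu : IsBlockSeq b u) {i j k : ℕ} (hij : i ≠ j)
    (hk : k ∈ supp b (u j)) : b.repr (u i) k = 0 := by
  by_contra hik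
  rcases hij.lt_or_gt with h | h
  · exact lt_irrefl k (hu.vecLt_of_lt h k (mem_supp.2 hik) k hk)
  · exact lt_irrefl k (hu.vecLt_of_lt h k hk k (mem_supp.2 hik))

theorem IsBlockSeq.repr_linearCombination (hu : IsBlockSeq b u) (c : ℕ →₀ 𝔽) {j k : ℕ}
    (hk : k ∈ supp b (u j)) :
    b.repr (Finsupp.linearCombination 𝔽 u c) k = c j * b.repr (u j) k := by
  rw [Finsupp.linearCombination_apply, map_finsuppSum, Finsupp.sum_apply]
  refine (Finsupp.sum_eq_single j (fun i _ hij => ?_) (fun _ => by simp)).trans (by simp)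
  simp [hu.repr_eq_zero_of_ne hij hk]

theorem IsBlockSeq.linearIndependent (hu : IsBlockSeq b u) : LinearIndependent 𝔽 u := by
  refine linearIndependent_iff.2 fun c hc => Finsupp.ext fun j => ?_
  obtain ⟨k, hk⟩ := supp_nonempty b (hu.1 j)
  have h := hu.repr_linearCombination c hk
  rw [hc, map_zero, Finsupp.zero_apply, eq_comm, mul_eq_zero] at h
  exact h.resolve_right (mem_supp.1 hk)

theorem IsBlockSeq.le_msup_of_le (hu : IsBlockSeq b u) {j m k : ℕ} (hjm : j ≤ m)
    (hk : k ∈ supp b (u j)) : k ≤ msup b (u m) := by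
  rcases hjm.lt_or_eq with h | rfl
  · obtain ⟨k', hk'⟩ := supp_nonempty b (hu.1 m)
    exact (hu.vecLt_of_lt h k hk k' hk').le.trans (le_msup hk')
  · exact le_msup hk

theorem IsBlockSeq.mem_span_image_Ioi (hu : IsBlockSeq b u) {v : E}
    (hv : v ∈ span 𝔽 (range u)) {m : ℕ} (hvm : NatLt b (msup b (u m)) v) :
    v ∈ span 𝔽 (u '' Ioi m) := by
  rw [← Finsupp.range_linearCombination] at hv
  obtain ⟨c, rfl⟩ := hv
  refine (Finsupp.mem_span_image_iff_linearCombination 𝔽).2 ⟨c, ?_, rfl⟩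
  refine (Finsupp.mem_supported' _ _).2 fun j hj => ?_
  obtain ⟨k, hk⟩ := supp_nonempty b (hu.1 j)
  have hvk : b.repr (Finsupp.linearCombination 𝔽 u c) k = 0 := by
    by_contra h
    exact (hvm k (mem_supp.2 h)).not_ge (hu.le_msup_of_le (not_lt.1 hj) hk)
  rw [hu.repr_linearCombination c hk, mul_eq_zero] at hvk
  exact hvk.resolve_right (mem_supp.1 hk)

theorem IsBlockSubspace.not_finiteDimensional {X : Submodule 𝔽 E} (hX : IsBlockSubspace b X) :
    ¬FiniteDimensional 𝔽 X := by
  obtain ⟨u, hu, rfl⟩ := hX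
  intro
  have := (linearIndependent_span hu.linearIndependent).finite_of_isNoetherian
  exact not_finite ℕ

end BlockSequences

section InfiniteDimensional

variable {𝔽 : Type} [Field 𝔽] {E : Type} [AddCommGroup E] [Module 𝔽 E] {b : Module.Basis ℕ 𝔽 E}

/-- `supportAbove b n` has finite codimension. -/
theorem not_finiteDimensional_inf_supportAbove {Z : Submodule 𝔽 E}
    (hZ : ¬FiniteDimensional 𝔽 Z) (n : ℕ) : ¬FiniteDimensional 𝔽 ↥(Z ⊓ supportAbove b n) := by
  rw [← fg_iff_finiteDimensional] at hZ ⊢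
  exact fun h => hZ (fg_of_fg_map_of_fg_inf_ker _ (IsNoetherian.noetherian _) h)

theorem exists_mem_ne_zero_natLt {Z : Submodule 𝔽 E} (hZ : ¬FiniteDimensional 𝔽 Z) (n : ℕ) :
    ∃ v ∈ Z, v ≠ 0 ∧ NatLt b n v := by
  have hne : Z ⊓ supportAbove b n ≠ ⊥ := by
    intro h
    apply not_finiteDimensional_inf_supportAbove hZ n
    rw [h]
    infer_instance
  obtain ⟨v, ⟨hvZ, hvn⟩, hv⟩ := exists_mem_ne_zero_of_ne_bot hne
  exact ⟨v, hvZ, hv, mem_supportAbove.1 hvn⟩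

variable (b) in
open Classical in
noncomputable def pickAbove (Y : Submodule 𝔽 E) (n : ℕ) : E :=
  if h : ∃ v ∈ Y, v ≠ 0 ∧ NatLt b n v then h.choose else 0

variable (b) in
/-- The list holds the subspaces played so far, the most recent one first. -/
noncomputable def greedy : List (Submodule 𝔽 E) → E
  | [] => 0
  | Y :: l => pickAbove b Y (msup b (greedy l))

theorem pickAbove_spec {Y : Submodule 𝔽 E} (hY : ¬FiniteDimensional 𝔽 Y) (n : ℕ) :
    pickAbove b Y n ∈ Y ∧ pickAbove b Y n ≠ 0 ∧ NatLt b n (pickAbove b Y n) := by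
  have h := exists_mem_ne_zero_natLt (b := b) hY n
  rw [pickAbove, dif_pos h]
  exact h.choose_spec

theorem isBlockSeq_greedy {Y : ℕ → Submodule 𝔽 E} (hY : ∀ i, ¬FiniteDimensional 𝔽 (Y i)) :
    IsBlockSeq b (fun i => greedy b (hist Y (i + 1)).reverse) ∧
      ∀ i, greedy b (hist Y (i + 1)).reverse ∈ Y i := by
  have h i : greedy b (hist Y (i + 1)).reverse =
      pickAbove b (Y i) (msup b (greedy b (hist Y i).reverse)) := by
    rw [reverse_hist_succ, greedy]
  refine ⟨⟨fun i => ?_, fun i => vecLt_of_natLt_msup ?_⟩, fun i => ?_⟩ <;> simp only [h]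
  · exact (pickAbove_spec (hY i) _).2.1
  · exact (pickAbove_spec (hY (i + 1)) _).2.2
  · exact (pickAbove_spec (hY i) _).1

theorem exists_isBlockSubspace_le {Z : Submodule 𝔽 E} (hZ : ¬FiniteDimensional 𝔽 Z) :
    ∃ C, IsBlockSubspace b C ∧ C ≤ Z := by
  obtain ⟨hw, hwZ⟩ := isBlockSeq_greedy (b := b) (Y := fun _ => Z) fun _ => hZ
  exact ⟨_, ⟨_, hw, rfl⟩, span_le.2 (range_subset_iff.2 hwZ)⟩

end InfiniteDimensional

section Games

variable {𝔽 : Type} [Field 𝔽] {E : Type} [AddCommGroup E] [Module 𝔽 E] {b : Module.Basis ℕ 𝔽 E}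
  {X W : Submodule 𝔽 E} {p : List E} {A : Set (ℕ → E)}

theorem IIWinsG.mono (h : IIWinsG b X p A) (hWX : W ≤ X) : IIWinsG b W p A := by
  obtain ⟨σ, hσ⟩ := h
  exact ⟨σ, fun Y hY => hσ Y fun i => ⟨(hY i).1.trans hWX, (hY i).2⟩⟩

/-- II plays against the moves of I cut down to `supportAbove b N`. -/
theorem IIWinsG.of_inf_supportAbove_le (h : IIWinsG b X p A) {N : ℕ}
    (hW : W ⊓ supportAbove b N ≤ X) : IIWinsG b W p A := by
  obtain ⟨σ, hσ⟩ := h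
  refine ⟨fun l => σ (l.map (· ⊓ supportAbove b N)), fun Y hY => ?_⟩
  simp only [map_hist]
  obtain ⟨hlegal, hA⟩ := hσ (fun i => Y i ⊓ supportAbove b N) fun i =>
    ⟨(inf_le_inf_right _ (hY i).1).trans hW, not_finiteDimensional_inf_supportAbove (hY i).2 N⟩
  exact ⟨fun i => ⟨(hlegal i).1.1, (hlegal i).2⟩, hA⟩

theorem iiWinsG_of_forall_prefCat_mem (h : ∀ f, prefCat p f ∈ A) : IIWinsG b X p A :=
  ⟨fun l => greedy b l.reverse, fun _ hY =>
    have hw := isBlockSeq_greedy (b := b) fun i => (hY i).2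
    ⟨fun i => ⟨hw.2 i, hw.1.1 i, hw.1.2 i⟩, h _⟩⟩

/-- II answers the first move `Y₀` of I with a vector `y ∈ Y₀` from which II wins, and then
follows a winning strategy from `p ++ [y]` against the later moves cut down above `y`. -/
theorem IIWinsG.of_forall_exists_snoc
    (h : ∀ Z ≤ X, ¬FiniteDimensional 𝔽 Z → ∃ y ∈ Z, y ≠ 0 ∧ IIWinsG b X (p ++ [y]) A) :
    IIWinsG b X p A := by
  simp only [IIWinsG] at h
  choose! F hFZ hF0 S hS using h
  let σ : List (Submodule 𝔽 E) → E := fun l => match l with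
    | [] => 0
    | [Y₀] => F Y₀
    | Y₀ :: Y₁ :: l => S Y₀ ((Y₁ :: l).map (· ⊓ supportAbove b (msup b (F Y₀))))
  refine ⟨σ, fun Y hY => ?_⟩
  set Y' : ℕ → Submodule 𝔽 E := fun i => Y (i + 1) ⊓ supportAbove b (msup b (F (Y 0)))
  obtain ⟨hlegal, hA⟩ := hS (Y 0) (hY 0).1 (hY 0).2 Y' fun i =>
    ⟨inf_le_left.trans (hY (i + 1)).1, not_finiteDimensional_inf_supportAbove (hY (i + 1)).2 _⟩
  have hσ : (fun i => σ (hist Y (i + 1))) =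
      Stream'.cons (F (Y 0)) fun i => S (Y 0) (hist Y' (i + 1)) := by
    funext i
    cases i with
    | zero => rfl
    | succ i =>
      rw [hist_succ' Y (i + 1), hist_succ' (fun j => Y (j + 1)) i]
      show S _ (List.map _ _) = _
      rw [← hist_succ' (fun j => Y (j + 1)) i, map_hist]
      rfl
  refine ⟨fun i => ?_, by rw [hσ, ← prefCat_append_singleton]; exact hA⟩
  rw [show σ (hist Y (i + 2)) = _ from congrFun hσ (i + 1),
    show σ (hist Y (i + 1)) = _ from congrFun hσ i]
  cases i with
  | zero =>
    exact ⟨hFZ _ (hY 0).1 (hY 0).2, hF0 _ (hY 0).1 (hY 0).2,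
      vecLt_of_natLt_msup (mem_supportAbove.1 (hlegal 0).1.2)⟩
  | succ i => exact ⟨(hlegal i).1.1, (hlegal i).2⟩

theorem iWinsF_compl_of_isOpen [TopologicalSpace E] (hA : IsOpen A) {z : List E}
    {R : List E → Prop} (hz : R z)
    (hR : ∀ q, R q → ∃ N, ∀ y ∈ W, y ≠ 0 → NatLt b N y → R (q ++ [y]))
    (hRA : ∀ q, R q → ¬∀ f, prefCat q f ∈ A) : IWinsF b W z Aᶜ := by
  choose! N hN using hR
  -- I's moves must increase strictly, and must bound `N` of the position reached.
  refine ⟨prefixSum fun l => N (z ++ l), fun x hx => ?_⟩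
  have hRx i : R (z ++ hist x i) := by
    induction i with
    | zero => simpa [hist] using hz
    | succ i ih =>
      rw [hist_succ, ← List.append_assoc]
      exact hN _ ih _ (hx i).1 (hx i).2.1
        ((hx i).2.2.1.mono (le_prefixSum (fun l => N (z ++ l)) _))
  refine ⟨fun i => hist_succ x i ▸ prefixSum_lt_append_singleton _ _ _, fun hxA => ?_⟩
  obtain ⟨n, hn⟩ := hA.exists_cylinder_subset hxA
  exact hRA _ (hRx n) fun f => hn (prefCat_append_hist_mem_cylinder z x f n)

end Games

section Fusion

variable {𝔽 : Type} [Field 𝔽] {E : Type} [AddCommGroup E] [Module 𝔽 E]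
  (b : Module.Basis ℕ 𝔽 E) (V : Submodule 𝔽 E) (P : ℕ → Submodule 𝔽 E → Prop)

open Classical in
noncomputable def fusionChain : ℕ → Submodule 𝔽 E
  | 0 => V
  | s + 1 =>
    if h : ∃ C, IsBlockSubspace b C ∧ C ≤ fusionChain s ∧ P s C then h.choose else fusionChain s

noncomputable def fusionSeq (s : ℕ) : E :=
  greedy b (hist (fusionChain b V P) (s + 1)).reverse

noncomputable def fusion : Submodule 𝔽 E :=
  span 𝔽 (range (fusionSeq b V P))

variable {b V P}

theorem fusionChain_antitone : Antitone (fusionChain b V P) := by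
  refine antitone_nat_of_succ_le fun s => ?_
  rw [fusionChain]
  split_ifs with h
  exacts [h.choose_spec.2.1, le_rfl]

theorem isBlockSubspace_fusionChain (hV : IsBlockSubspace b V) (s : ℕ) :
    IsBlockSubspace b (fusionChain b V P s) := by
  induction s with
  | zero => exact hV
  | succ s ih =>
    rw [fusionChain]
    split_ifs with h
    exacts [h.choose_spec.1, ih]

theorem fusionChain_succ_spec {s : ℕ}
    (h : ∃ C, IsBlockSubspace b C ∧ C ≤ fusionChain b V P s ∧ P s C) :
    P s (fusionChain b V P (s + 1)) := by
  rw [fusionChain, dif_pos h]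
  exact h.choose_spec.2.2

theorem isBlockSeq_fusionSeq (hV : IsBlockSubspace b V) :
    IsBlockSeq b (fusionSeq b V P) ∧ ∀ s, fusionSeq b V P s ∈ fusionChain b V P s :=
  isBlockSeq_greedy fun s => (isBlockSubspace_fusionChain hV s).not_finiteDimensional

theorem isBlockSubspace_fusion (hV : IsBlockSubspace b V) : IsBlockSubspace b (fusion b V P) :=
  ⟨_, (isBlockSeq_fusionSeq hV).1, rfl⟩

theorem fusion_le (hV : IsBlockSubspace b V) : fusion b V P ≤ V :=
  span_le.2 <| range_subset_iff.2 fun s =>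
    fusionChain_antitone (Nat.zero_le s) ((isBlockSeq_fusionSeq hV).2 s)

theorem exists_fusion_inf_supportAbove_le (hV : IsBlockSubspace b V) (m : ℕ) :
    ∃ N, fusion b V P ⊓ supportAbove b N ≤ fusionChain b V P m := by
  obtain ⟨hw, hwC⟩ := isBlockSeq_fusionSeq (P := P) hV
  refine ⟨msup b (fusionSeq b V P m), fun v hv => ?_⟩
  refine span_le.2 ?_ (hw.mem_span_image_Ioi hv.1 (mem_supportAbove.1 hv.2))
  rintro _ ⟨j, hj, rfl⟩
  exact fusionChain_antitone (le_of_lt hj) (hwC j)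

theorem exists_isBlockSubspace_le_fusionChain (hV : IsBlockSubspace b V) {Y : Submodule 𝔽 E}
    (hY : ¬FiniteDimensional 𝔽 Y) (hYW : Y ≤ fusion b V P) (m : ℕ) :
    ∃ C, IsBlockSubspace b C ∧ C ≤ Y ∧ C ≤ fusionChain b V P m := by
  obtain ⟨N, hN⟩ := exists_fusion_inf_supportAbove_le (P := P) hV m
  obtain ⟨C, hC, hCY⟩ :=
    exists_isBlockSubspace_le (b := b) (not_finiteDimensional_inf_supportAbove hY N)
  exact ⟨C, hC, hCY.trans inf_le_left, hCY.trans ((inf_le_inf_right _ hYW).trans hN)⟩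

end Fusion

section Forcing

variable {𝔽 : Type} [Field 𝔽] {E : Type} [AddCommGroup E] [Module 𝔽 E]
  (b : Module.Basis ℕ 𝔽 E) (A : Set (ℕ → E))

def Rejects (W : Submodule 𝔽 E) (q : List E) : Prop :=
  ∀ Y, IsBlockSubspace b Y → Y ≤ W → ¬IIWinsG b Y q A

def Forces : List E ⊕ List E → Submodule 𝔽 E → Prop
  | .inl q, C => IIWinsG b C q A
  | .inr q, C => ∀ y ∈ C, y ≠ 0 → Rejects b A C (q ++ [y])

variable {b A} {V : Submodule 𝔽 E} {τ : ℕ → List E ⊕ List E}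

local notation "𝒲" => fusion b V (Forces b A ∘ τ)

theorem iiWinsG_fusion_of_le (hτ : Function.Surjective τ) (hV : IsBlockSubspace b V)
    {Y : Submodule 𝔽 E} {q : List E} (hY : IsBlockSubspace b Y) (hYW : Y ≤ 𝒲)
    (h : IIWinsG b Y q A) : IIWinsG b 𝒲 q A := by
  obtain ⟨s, hs⟩ := hτ (.inl q)
  have hC : Forces b A (τ s) (fusionChain b V (Forces b A ∘ τ) (s + 1)) := by
    apply fusionChain_succ_spec
    obtain ⟨C, hC, hCY, hCs⟩ :=
      exists_isBlockSubspace_le_fusionChain hV hY.not_finiteDimensional hYW s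
    refine ⟨C, hC, hCs, ?_⟩
    rw [Function.comp_apply, hs]
    exact h.mono hCY
  rw [hs] at hC
  obtain ⟨N, hN⟩ := exists_fusion_inf_supportAbove_le hV (s + 1)
  exact hC.of_inf_supportAbove_le hN

theorem Rejects.exists_snoc (hτ : Function.Surjective τ) (hV : IsBlockSubspace b V)
    {q : List E} (hq : Rejects b A 𝒲 q) :
    ∃ N, ∀ y ∈ 𝒲, y ≠ 0 → NatLt b N y → Rejects b A 𝒲 (q ++ [y]) := by
  obtain ⟨s, hs⟩ := hτ (.inr q)
  have hC : Forces b A (τ s) (fusionChain b V (Forces b A ∘ τ) (s + 1)) := by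
    apply fusionChain_succ_spec
    by_contra! hno
    refine hq _ (isBlockSubspace_fusion hV) le_rfl (.of_forall_exists_snoc fun Z hZW hZ => ?_)
    obtain ⟨C, hC, hCZ, hCs⟩ := exists_isBlockSubspace_le_fusionChain hV hZ hZW s
    have := hno C hC hCs
    simp only [Function.comp_apply, hs, Forces, Rejects, not_forall, not_not] at this
    obtain ⟨y, hyC, hy0, Y, hY, hYC, hYy⟩ := this
    exact ⟨y, hCZ hyC, hy0, iiWinsG_fusion_of_le hτ hV hY (hYC.trans (hCZ.trans hZW)) hYy⟩
  rw [hs] at hC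
  obtain ⟨N, hN⟩ := exists_fusion_inf_supportAbove_le hV (s + 1)
  refine ⟨N, fun y hyW hy0 hyN Y hY hYW hYy => ?_⟩
  obtain ⟨C, hC', hCY, hCs⟩ :=
    exists_isBlockSubspace_le_fusionChain hV hY.not_finiteDimensional hYW (s + 1)
  exact hC y (hN ⟨hyW, mem_supportAbove.2 hyN⟩) hy0 C hC' hCs (hYy.mono hCY)

end Forcing

theorem isOpen_strategicallyRamsey_general
    {𝔽 : Type} [Field 𝔽] [Countable 𝔽]
    {E : Type} [AddCommGroup E] [Module 𝔽 E]
    [TopologicalSpace E]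
    (b : Module.Basis ℕ 𝔽 E) (U : Set (ℕ → E)) (hU : IsOpen U) :
    StrategicallyRamsey b U := by
  intro V hV z _
  have : Countable E := b.repr.injective.countable
  obtain ⟨τ, hτ⟩ := exists_surjective_nat (List E ⊕ List E)
  have hW := isBlockSubspace_fusion (P := Forces b U ∘ τ) hV
  by_cases hz : Rejects b U (fusion b V (Forces b U ∘ τ)) z
  · refine ⟨_, fusion_le hV, hW, Or.inr ?_⟩
    exact iWinsF_compl_of_isOpen hU hz (fun q hq => hq.exists_snoc hτ hV)
      fun q hq hqU => hq _ hW le_rfl (iiWinsG_of_forall_prefCat_mem hqU)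
  · simp only [Rejects, not_forall, not_not] at hz
    obtain ⟨Y, hY, hYW, hYz⟩ := hz
    exact ⟨Y, hYW.trans (fusion_le hV), hY, Or.inl hYz⟩

theorem isOpen_strategicallyRamsey
    {𝔽 : Type} [Field 𝔽] [Countable 𝔽]
    {E : Type} [AddCommGroup E] [Module 𝔽 E]
    [TopologicalSpace E] [DiscreteTopology E]
    (b : Module.Basis ℕ 𝔽 E) (U : Set (ℕ → E)) (hU : IsOpen U) :
    StrategicallyRamsey b U :=
  isOpen_strategicallyRamsey_general b U hU
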